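/- Let K₀ > 0 and let f : ℝ → ℝ be twice differentiable on (0,∞) with f'(u) > 0 and f'(u)f''(u)/u = K₀ for all u > 0. Then there exist constants c₁, c₂ ∈ ℝ such that for all u > 0 one has f'(u) = √(K₀u² + c₁) and f(u) = (u/2)√(K₀u² + c₁) + (c₁/(2√K₀)) ln|2√K₀(√K₀ u + √(K₀u² + c₁))| + c₂. -/

import Mathlib

/-!
Multiplying `f' f'' = K₀ u` by two exhibits it as `((f')²)' = (K₀ u²)'`, so `(f')² - K₀ u²` is a
constant `c₁`, and `f' > 0` picks the positive square root. The second formula is then the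
classical primitive of `√(K₀ u² + c₁)`, and two functions on `(0, ∞)` with the same derivative
differ by a constant `c₂`.
-/

open Real Set

theorem exists_sq_eq_of_mul_deriv_eq {g : ℝ → ℝ} {K : ℝ} {s : Set ℝ} (hs : IsOpen s)
    (hs' : IsPreconnected s) (hg : ∀ u ∈ s, DifferentiableAt ℝ g u)
    (h : ∀ u ∈ s, g u * deriv g u = K * u) :
    ∃ c, ∀ u ∈ s, g u ^ 2 = K * u ^ 2 + c := by
  have hsq : ∀ u ∈ s, HasDerivAt (fun v ↦ g v ^ 2) (2 * (K * u)) u := fun u hu ↦ by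
    simpa [← h u hu, mul_assoc] using (hg u hu).hasDerivAt.fun_pow 2
  have hquad : ∀ u, HasDerivAt (fun v : ℝ ↦ K * v ^ 2) (2 * (K * u)) u := fun u ↦ by
    simpa [mul_left_comm] using (hasDerivAt_pow 2 u).const_mul K
  obtain ⟨c, hc⟩ := hs.exists_eq_add_of_deriv_eq hs'
    (fun u hu ↦ (hsq u hu).differentiableAt.differentiableWithinAt)
    (fun u _ ↦ (hquad u).differentiableAt.differentiableWithinAt)
    (fun u hu ↦ by simp only [(hsq u hu).deriv, (hquad u).deriv])
  exact ⟨c, fun u hu ↦ hc hu⟩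

noncomputable def sqrtQuadPrimitive (K c u : ℝ) : ℝ :=
  u / 2 * √(K * u ^ 2 + c) + c / (2 * √K) * log |2 * √K * (√K * u + √(K * u ^ 2 + c))|

theorem hasDerivAt_sqrtQuadPrimitive {K c u : ℝ} (hK : 0 < K) (hu : 0 < u)
    (hc : 0 < K * u ^ 2 + c) :
    HasDerivAt (sqrtQuadPrimitive K c) √(K * u ^ 2 + c) u := by
  set g := √(K * u ^ 2 + c) with hg_def
  have hg : 0 < g := sqrt_pos.mpr hc
  have hg2 : g ^ 2 = K * u ^ 2 + c := sq_sqrt hc.le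
  have hsK : 0 < √K := sqrt_pos.mpr hK
  have hsK2 : √K ^ 2 = K := sq_sqrt hK.le
  have hroot : HasDerivAt (fun v ↦ √(K * v ^ 2 + c)) (K * u / g) u := by
    have := (((hasDerivAt_pow 2 u).const_mul K).add_const c).sqrt hc.ne'
    convert this using 1
    field_simp
    ring
  have harg : HasDerivAt (fun v ↦ 2 * √K * (√K * v + √(K * v ^ 2 + c)))
      (2 * √K * (√K + K * u / g)) u := by
    simpa using (((hasDerivAt_id u).const_mul √K).add hroot).const_mul (2 * √K)
  have hlog := harg.log (by positivity)
  have hprod := ((hasDerivAt_id' u).div_const 2).fun_mul hroot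
  unfold sqrtQuadPrimitive
  simp only [log_abs]
  refine (hprod.add (hlog.const_mul (c / (2 * √K)))).congr_deriv ?_
  rw [← hg_def]
  -- the logarithmic term contributes `c / (2g)`, and `g / 2 + (K u² + c) / (2g) = g`
  have : 0 < √K * u + g := by positivity
  field_simp
  linear_combination (-(√K) * (u * √K + g)) * hg2 - c * u * hsK2

theorem surface_of_revolution_constant_K
    (K₀ : ℝ) (hK₀ : 0 < K₀) (f : ℝ → ℝ)
    (hf : ∀ u ∈ Set.Ioi (0 : ℝ), DifferentiableAt ℝ f u)
    (hf' : ∀ u ∈ Set.Ioi (0 : ℝ), DifferentiableAt ℝ (deriv f) u)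
    (hpos : ∀ u ∈ Set.Ioi (0 : ℝ), 0 < deriv f u)
    (hK : ∀ u ∈ Set.Ioi (0 : ℝ), deriv f u * deriv (deriv f) u / u = K₀) :
    ∃ c₁ c₂ : ℝ, ∀ u ∈ Set.Ioi (0 : ℝ),
      deriv f u = Real.sqrt (K₀ * u ^ 2 + c₁) ∧
      f u = u / 2 * Real.sqrt (K₀ * u ^ 2 + c₁)
          + c₁ / (2 * Real.sqrt K₀) *
              Real.log |2 * Real.sqrt K₀ * (Real.sqrt K₀ * u + Real.sqrt (K₀ * u ^ 2 + c₁))|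
          + c₂ := by
  obtain ⟨c₁, hc₁⟩ := exists_sq_eq_of_mul_deriv_eq (K := K₀) isOpen_Ioi isPreconnected_Ioi hf' fun u hu ↦ by
    rw [← hK u hu, div_mul_cancel₀ _ (ne_of_gt hu)]
  have hderiv : ∀ u ∈ Ioi (0 : ℝ), deriv f u = √(K₀ * u ^ 2 + c₁) := fun u hu ↦ by
    rw [← hc₁ u hu, sqrt_sq (hpos u hu).le]
  have hprim : ∀ u ∈ Ioi (0 : ℝ), HasDerivAt (sqrtQuadPrimitive K₀ c₁) (deriv f u) u :=
    fun u hu ↦ hderiv u hu ▸ hasDerivAt_sqrtQuadPrimitive hK₀ hu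
      (hc₁ u hu ▸ pow_pos (hpos u hu) 2)
  obtain ⟨c₂, hc₂⟩ := isOpen_Ioi.exists_eq_add_of_deriv_eq isPreconnected_Ioi
    (fun u hu ↦ (hf u hu).differentiableWithinAt)
    (fun u hu ↦ (hprim u hu).differentiableAt.differentiableWithinAt)
    (fun u hu ↦ (hprim u hu).deriv.symm)
  exact ⟨c₁, c₂, fun u hu ↦ ⟨hderiv u hu, hc₂ hu⟩⟩
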